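/- Let (S,·) be an (h,m)-semigroup with a chain of ideals S_0 ⊂ S_1 ⊂ ⋯ ⊂ S_h = S as in the definition, such that S_0 = {0} where 0 is the zero of S. Then for every n ≥ 2, the semigroup (S,·) satisfies the semigroup identity v_{n,m}^{(h)} ≈ (v_{n,m}^{(h)})². -/

import Mathlib

universe u v

/-- `spowM x k = x^(k+1)`, the `(k+1)`-st power in a semigroup. -/
def spowM {S : Type*} [Mul S] (x : S) : ℕ → S
  | 0 => x
  | k + 1 => spowM x k * x

/-- `opow gmul a k = a^(k+1)` for an explicit binary operation. -/
def opow {G : Type*} (gmul : G → G → G) (a : G) : ℕ → G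
  | 0 => a
  | k + 1 => gmul (opow gmul a k) a

/-- The subset `T` is an abelian group of exponent dividing `m` under the semigroup
multiplication. -/
def IsAbGroupExp {S : Type*} [Mul S] (m : ℕ) (T : Set S) : Prop :=
  (∀ a ∈ T, ∀ b ∈ T, a * b ∈ T) ∧ (∀ a ∈ T, ∀ b ∈ T, a * b = b * a) ∧
    ∃ e ∈ T, (∀ a ∈ T, e * a = a ∧ a * e = a) ∧ (∀ a ∈ T, ∃ b ∈ T, a * b = e) ∧
      ∀ a ∈ T, spowM a (m - 1) = e

/-- The Rees quotient `U/T` is a Brandt semigroup over an abelian group of exponent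
dividing `m`: the nonzero classes `U \ T` are in a multiplication-respecting bijection with
`ι × G × ι` for some nonempty `ι` and some abelian group `(G, gmul)` of exponent dividing `m`. -/
def IsBrandtFactor {S : Type u} [Mul S] (m : ℕ) (T U : Set S) : Prop :=
  ∃ (ι : Type u) (G : Type u) (gmul : G → G → G) (ge : G),
    Nonempty ι ∧
    (∀ a b c : G, gmul (gmul a b) c = gmul a (gmul b c)) ∧
    (∀ a b : G, gmul a b = gmul b a) ∧
    (∀ a : G, gmul ge a = a) ∧
    (∀ a : G, ∃ b : G, gmul a b = ge) ∧
    (∀ a : G, opow gmul a (m - 1) = ge) ∧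
    ∃ φ : S → ι × G × ι,
      Set.BijOn φ (U \ T) Set.univ ∧
      ∀ a ∈ U \ T, ∀ b ∈ U \ T,
        ((φ a).2.2 = (φ b).1 →
          a * b ∈ U \ T ∧ φ (a * b) = ((φ a).1, gmul (φ a).2.1 (φ b).2.1, (φ b).2.2)) ∧
        ((φ a).2.2 ≠ (φ b).1 → a * b ∈ T)

/-- `C 0 ⊂ C 1 ⊂ ⋯ ⊂ C h = S` is a principal chain of ideals witnessing that the semigroup
`S` is an `(h,m)`-semigroup: `C 0` is an abelian group of exponent dividing `m` and each
Rees quotient `C (j+1) / C j` is a Brandt semigroup over such a group. -/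
structure IsHMChain {S : Type u} [Semigroup S] (h m : ℕ) (C : ℕ → Set S) : Prop where
  chain : ∀ j < h, C j ⊂ C (j + 1)
  ideal : ∀ j ≤ h, (C j).Nonempty ∧ ∀ a ∈ C j, ∀ s : S, a * s ∈ C j ∧ s * a ∈ C j
  top : C h = Set.univ
  base : IsAbGroupExp m (C 0)
  factor : ∀ j < h, IsBrandtFactor m (C j) (C (j + 1))

/-- Evaluation of a (nonempty) word, given as a list of variables, in a magma with an
explicit binary operation; the empty word evaluates to `none`. -/
def wEval {ι S : Type*} (mul : S → S → S) (ρ : ι → S) : List ι → Option S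
  | [] => none
  | a :: l => some (l.foldl (fun s i => mul s (ρ i)) (ρ a))

/-- The word `u_{n,k,m} = x₁⋯x_{n+k}(xₙ⋯x₁·x_{n+1}⋯x_{n+k})^{2m-1}` (variables 0-indexed). -/
def uWord (n k m : ℕ) : List ℕ :=
  List.range (n + k) ++
    (List.replicate (2 * m - 1) ((List.range n).reverse ++ List.range' n k)).flatten

/-- The words `v_{n,m}^{(h)}` (`h ≥ 1`), over variables indexed by `h`-tuples from `{0,…,2n-1}`:
`v_{n,m}^{(1)} = u_{n,n,m}`, and `v_{n,m}^{(h+1)}` is obtained by substituting, for the `j`-th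
variable of `v_{n,m}^{(1)}`, the copy of `v_{n,m}^{(h)}` whose variables get `j` appended. -/
def vWord (n m : ℕ) : ℕ → List (List ℕ)
  | 0 => []
  | 1 => (uWord n n m).map (fun i => [i])
  | h + 2 => (uWord n n m).flatMap (fun j => (vWord n m (h + 1)).map (fun xs => xs ++ [j]))

/-!
By induction on the length of the chain, every value `y` of `v^{(k)}` is idempotent or lies in
the bottom ideal `C 0`, which here is `{z}`. The word `v^{(k+1)}` is both `v^{(k)}` with copies
of `u_{n,n,m}` substituted for its letters and `u_{n,n,m}` with copies of `v^{(k)}` substituted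
for its letters. Applying the induction hypothesis to the chain `C 1 ⊂ ⋯`, the first reading puts
`y` in `C 1` (or makes it idempotent) and the second makes every letter idempotent or puts it in
`C 1`.

It remains to see that a value `y ∈ C 1 \ C 0` of `u_{n,n,m}` at such letters is idempotent.
Let `y = (r, g, r')` in the Brandt factor and `e = (r, 1, r)`, so `e y = y`. Multiplying `e` by
the letters one at a time stays in `C 1 \ C 0` and follows a walk on the index set: an
idempotent letter fixes the current element, while a letter `(p, h, p')` needs the current
column to be `p`, moves it to `p'` and multiplies the group entry by `h`. Every letter occurs
exactly `2m` times in `u_{n,n,m}`, so the net flow of the walk through each index is even: the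
walk is closed, `r' = r`, and `g` is a `2m`-th power, hence `1`.
-/

open List

section Eval

variable {κ S : Type*} [Semigroup S] (ρ : κ → S)

def evalFrom (s : S) (l : List κ) : S := l.foldl (fun t i => t * ρ i) s

lemma wEval_cons (a : κ) (l : List κ) :
    wEval (· * ·) ρ (a :: l) = some (evalFrom ρ (ρ a) l) := rfl

lemma evalFrom_cons (s : S) (a : κ) (l : List κ) :
    evalFrom ρ s (a :: l) = evalFrom ρ (s * ρ a) l := rfl

lemma evalFrom_append (s : S) (l₁ l₂ : List κ) :
    evalFrom ρ s (l₁ ++ l₂) = evalFrom ρ (evalFrom ρ s l₁) l₂ :=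
  foldl_append

lemma mul_evalFrom (s t : S) (l : List κ) : s * evalFrom ρ t l = evalFrom ρ (s * t) l := by
  induction l generalizing t with
  | nil => rfl
  | cons a l ih => rw [evalFrom_cons, ih, evalFrom_cons, mul_assoc]

lemma evalFrom_eq_mul {l : List κ} {y : S} (hy : wEval (· * ·) ρ l = some y) (s : S) :
    evalFrom ρ s l = s * y := by
  cases l with
  | nil => cases hy
  | cons a l =>
    rw [wEval_cons, Option.some_inj] at hy
    rw [evalFrom_cons, ← hy, mul_evalFrom]

lemma wEval_append {l₁ l₂ : List κ} {y₁ y₂ : S} (h₁ : wEval (· * ·) ρ l₁ = some y₁)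
    (h₂ : wEval (· * ·) ρ l₂ = some y₂) : wEval (· * ·) ρ (l₁ ++ l₂) = some (y₁ * y₂) := by
  cases l₁ with
  | nil => cases h₁
  | cons a l =>
    rw [wEval_cons, Option.some_inj] at h₁
    rw [cons_append, wEval_cons, evalFrom_append, h₁, evalFrom_eq_mul ρ h₂]

lemma wEval_map {α : Type*} (f : α → κ) (l : List α) :
    wEval (· * ·) ρ (l.map f) = wEval (· * ·) (ρ ∘ f) l := by
  cases l with
  | nil => rfl
  | cons a l => simp [wEval, foldl_map]

lemma exists_wEval_eq_some {l : List κ} (hl : l ≠ []) : ∃ y, wEval (· * ·) ρ l = some y := by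
  cases l with
  | nil => exact absurd rfl hl
  | cons a l => exact ⟨_, rfl⟩

lemma wEval_flatMap {α : Type*} {σ : α → List κ} {y : α → S}
    (hσ : ∀ a, wEval (· * ·) ρ (σ a) = some (y a)) (L : List α) :
    wEval (· * ·) ρ (L.flatMap σ) = wEval (· * ·) y L := by
  induction L with
  | nil => rfl
  | cons a L ih =>
    rcases eq_or_ne L [] with rfl | hL
    · rw [flatMap_cons, flatMap_nil, append_nil, hσ a]
      rfl
    · obtain ⟨v, hv⟩ := exists_wEval_eq_some y hL
      rw [flatMap_cons, wEval_append ρ (hσ a) (ih.trans hv), ← singleton_append,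
        wEval_append y (y₁ := y a) rfl hv]

end Eval

section Words

lemma uWord_perm {m : ℕ} (hm : 1 ≤ m) (n : ℕ) :
    uWord n n m ~ (replicate (2 * m) (range (n + n))).flatten := by
  have hblock : (range n).reverse ++ range' n n ~ range (n + n) := by
    rw [range_add, range'_eq_map_range]
    exact (reverse_perm _).append_right _
  have hblocks : ∀ r, (replicate r ((range n).reverse ++ range' n n)).flatten ~
      (replicate r (range (n + n))).flatten := fun r => by
    induction r with
    | zero => rfl
    | succ r ih => simpa only [replicate_succ, flatten_cons] using hblock.append ih
  obtain ⟨k, hk⟩ : ∃ k, 2 * m = k + 1 := ⟨2 * m - 1, by omega⟩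
  rw [uWord, hk, Nat.add_sub_cancel, replicate_succ, flatten_cons]
  exact (hblocks k).append_left _

@[to_additive]
lemma prod_map_uWord {M : Type*} [CommMonoid M] {m : ℕ} (hm : 1 ≤ m) (n : ℕ) (f : ℕ → M) :
    ((uWord n n m).map f).prod = ((range (n + n)).map f).prod ^ (2 * m) := by
  rw [((uWord_perm hm n).map f).prod_eq, map_flatten, prod_flatten, map_replicate,
    map_replicate, prod_replicate]

lemma uWord_ne_nil {n : ℕ} (hn : 1 ≤ n) (m : ℕ) : uWord n n m ≠ [] := by
  exact append_ne_nil_of_left_ne_nil (range_eq_nil.not.mpr (by omega)) _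

lemma vWord_succ (n m : ℕ) {k : ℕ} (hk : 1 ≤ k) :
    vWord n m (k + 1) = (uWord n n m).flatMap fun j => (vWord n m k).map (· ++ [j]) := by
  obtain ⟨k, rfl⟩ : ∃ k', k = k' + 1 := ⟨k - 1, by omega⟩
  rfl

lemma vWord_succ' (n m : ℕ) {k : ℕ} (hk : 1 ≤ k) :
    vWord n m (k + 1) = (vWord n m k).flatMap fun w => (uWord n n m).map (· :: w) := by
  induction k, hk using Nat.le_induction with
  | base => simp [vWord, flatMap_map, Function.comp_def]
  | succ k hk ih =>
    rw [vWord_succ n m (by omega : 1 ≤ k + 1)]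
    conv_lhs => rw [ih]
    conv_rhs => rw [vWord_succ n m hk]
    simp only [flatMap_assoc, map_flatMap, flatMap_map, map_map, Function.comp_def, cons_append]

lemma vWord_ne_nil {n : ℕ} (hn : 1 ≤ n) (m : ℕ) {k : ℕ} (hk : 1 ≤ k) : vWord n m k ≠ [] := by
  induction k, hk using Nat.le_induction with
  | base => simpa [vWord] using uWord_ne_nil hn m
  | succ k hk ih =>
    simpa [vWord_succ n m hk, ih] using exists_mem_of_ne_nil _ (uWord_ne_nil hn m)

end Words

def IsSemigroupIdeal {S : Type*} [Mul S] (I : Set S) : Prop :=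
  ∀ a ∈ I, ∀ s : S, a * s ∈ I ∧ s * a ∈ I

lemma IsSemigroupIdeal.evalFrom_mem {κ S : Type*} [Semigroup S] {I : Set S}
    (hI : IsSemigroupIdeal I) (ρ : κ → S) {s : S} (hs : s ∈ I) (l : List κ) :
    evalFrom ρ s l ∈ I := by
  induction l generalizing s with
  | nil => exact hs
  | cons a l ih => exact ih (hI s hs (ρ a)).1

structure IsBrandtChart {S ι G : Type*} [Mul S] [Mul G] [One G] (φ : S → ι × G × ι)
    (T U : Set S) : Prop where
  injOn : Set.InjOn φ (U \ T)
  surjOn : Set.SurjOn φ (U \ T) Set.univ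
  mul_of_eq : ∀ a ∈ U \ T, ∀ b ∈ U \ T, (φ a).2.2 = (φ b).1 →
    a * b ∈ U \ T ∧ φ (a * b) = ((φ a).1, (φ a).2.1 * (φ b).2.1, (φ b).2.2)
  mul_mem_of_ne : ∀ a ∈ U \ T, ∀ b ∈ U \ T, (φ a).2.2 ≠ (φ b).1 → a * b ∈ T

lemma opow_eq_pow_succ {M : Type*} [Monoid M] (a : M) (k : ℕ) :
    opow (· * ·) a k = a ^ (k + 1) := by
  induction k with
  | zero => rw [opow, pow_one]
  | succ k ih => rw [opow, ih, ← pow_succ]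

lemma IsBrandtFactor.exists_isBrandtChart {S : Type u} [Mul S] {m : ℕ} (hm : 1 ≤ m)
    {T U : Set S} (hF : IsBrandtFactor m T U) :
    ∃ (ι G : Type u) (_ : CommGroup G) (φ : S → ι × G × ι),
      (∀ g : G, g ^ m = 1) ∧ IsBrandtChart φ T U := by
  obtain ⟨ι, G, gmul, ge, -, hassoc, hcomm, hone, hinv, hexp, φ, hbij, hrule⟩ := hF
  let _ : CommGroup G :=
    { mul := gmul
      mul_assoc := hassoc
      one := ge
      one_mul := hone
      mul_one := fun a => (hcomm a ge).trans (hone a)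
      inv := fun a => (hinv a).choose
      inv_mul_cancel := fun a => (hcomm _ a).trans (hinv a).choose_spec
      mul_comm := hcomm }
  refine ⟨ι, G, inferInstance, φ, fun g => ?_, hbij.injOn, hbij.surjOn,
    fun a ha b hb => (hrule a ha b hb).1, fun a ha b hb => (hrule a ha b hb).2⟩
  rw [show m = m - 1 + 1 by omega, ← opow_eq_pow_succ]
  exact hexp g

open Classical in
noncomputable def arrowLabel {S ι G : Type*} [One G] (φ : S → ι × G × ι) (T U : Set S) (s : S) :
    G :=
  if s ∈ U \ T then (φ s).2.1 else 1

open Classical in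
noncomputable def arrowFlow {S ι G : Type*} (φ : S → ι × G × ι) (T U : Set S) (s : S) :
    ι →₀ ℤ :=
  if s ∈ U \ T then Finsupp.single (φ s).2.2 1 - Finsupp.single (φ s).1 1 else 0

namespace IsBrandtChart

variable {S ι G : Type*} [Semigroup S] [CommGroup G] {T U : Set S} {φ : S → ι × G × ι}
  (hB : IsBrandtChart φ T U)
include hB

lemma eq_of_mul_notMem {a b : S} (ha : a ∈ U \ T) (hb : b ∈ U \ T) (hab : a * b ∉ T) :
    (φ a).2.2 = (φ b).1 := by
  by_contra hne
  exact hab (hB.mul_mem_of_ne a ha b hb hne)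

lemma exists_unit (r : ι) : ∃ e ∈ U \ T, φ e = (r, 1, r) :=
  hB.surjOn (Set.mem_univ _)

lemma mul_self_of_unit {e : S} {r : ι} (he : e ∈ U \ T) (hφe : φ e = (r, 1, r)) : e * e = e := by
  obtain ⟨hmem, hφ⟩ := hB.mul_of_eq e he e he (by rw [hφe])
  exact hB.injOn hmem he (by rw [hφ, hφe, mul_one])

lemma mul_unit {a e : S} (ha : a ∈ U \ T) (he : e ∈ U \ T)
    (hφe : φ e = ((φ a).2.2, 1, (φ a).2.2)) : a * e = a := by
  obtain ⟨hmem, hφ⟩ := hB.mul_of_eq a ha e he (by rw [hφe])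
  exact hB.injOn hmem ha (by rw [hφ, hφe, mul_one])

lemma unit_mul {a e : S} (ha : a ∈ U \ T) (he : e ∈ U \ T)
    (hφe : φ e = ((φ a).1, 1, (φ a).1)) : e * a = a := by
  obtain ⟨hmem, hφ⟩ := hB.mul_of_eq e he a ha (by rw [hφe])
  exact hB.injOn hmem ha (by rw [hφ, hφe, one_mul])

lemma eq_unit_of_mul_self {a : S} (ha : a ∈ U \ T) (haa : a * a = a) :
    φ a = ((φ a).1, 1, (φ a).1) := by
  have hfst : (φ a).2.2 = (φ a).1 := hB.eq_of_mul_notMem ha ha (by rw [haa]; exact ha.2)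
  obtain ⟨-, hφ⟩ := hB.mul_of_eq a ha a ha hfst
  rw [haa] at hφ
  have hg : (φ a).2.1 = 1 := left_eq_mul.mp (congrArg (·.2.1) hφ)
  exact Prod.ext rfl (Prod.ext hg hfst)

section Ideals

variable (hT : IsSemigroupIdeal T) (hU : IsSemigroupIdeal U)
include hT hU

lemma unit_mul_eq_left_of_idempotent {b e : S} {r : ι} (hbb : b * b = b) (he : e ∈ U \ T)
    (hφe : φ e = (r, 1, r)) (heb : e * b ∉ T) : e * b = e := by
  have hd : e * b ∈ U \ T := ⟨(hU e he.1 b).1, heb⟩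
  obtain ⟨e', he', hφe'⟩ := hB.exists_unit (φ (e * b)).2.2
  have hde' : e * b * e' = e * b := hB.mul_unit hd he' hφe'
  have hx : b * e' ∈ U \ T :=
    ⟨(hU e' he'.1 b).2, fun h => heb (by simpa only [← mul_assoc, hde'] using (hT _ h e).2)⟩
  have hx1 : (φ (b * e')).1 = r := by
    have := hB.eq_of_mul_notMem he hx (by rwa [← mul_assoc, hde'])
    rw [hφe] at this
    exact this.symm
  -- `e * b = b * e'` makes `e * b` idempotent, and the only idempotent in row `r` is `e`
  have hcomm : e * b = b * e' := by
    obtain ⟨hmem, hφ⟩ := hB.mul_of_eq e he (b * e') hx (by rw [hφe, hx1])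
    rw [← hde', mul_assoc]
    refine hB.injOn hmem hx ?_
    rw [hφ, hφe]
    exact Prod.ext hx1.symm (Prod.ext (one_mul _) rfl)
  have hdd : e * b * (e * b) = e * b :=
    calc e * b * (e * b) = e * b * (b * e') := congrArg _ hcomm
      _ = e * (b * b) * e' := by simp only [mul_assoc]
      _ = e * b := by rw [hbb, hde']
  refine hB.injOn hd he ?_
  rw [hB.eq_unit_of_mul_self hd hdd, hφe, hcomm, hx1]

lemma mul_eq_left_of_idempotent {q b : S} (hq : q ∈ U \ T) (hbb : b * b = b) (hqb : q * b ∉ T) :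
    q * b = q := by
  obtain ⟨e, he, hφe⟩ := hB.exists_unit (φ q).2.2
  have hqe : q * e = q := hB.mul_unit hq he hφe
  have heb : e * b ∉ T := fun h => hqb (by rw [← hqe, mul_assoc]; exact (hT _ h q).2)
  rw [← hqe, mul_assoc, hB.unit_mul_eq_left_of_idempotent hT hU hbb he hφe heb]

lemma apply_mul {q s : S} (hq : q ∈ U \ T) (hs : s * s = s ∨ s ∈ U) (hqs : q * s ∉ T) :
    q * s ∈ U \ T ∧ (φ (q * s)).2.1 = (φ q).2.1 * arrowLabel φ T U s ∧
      Finsupp.single (φ (q * s)).2.2 1 - Finsupp.single (φ q).2.2 1 = arrowFlow φ T U s := by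
  by_cases hsUT : s ∈ U \ T
  · have hlink := hB.eq_of_mul_notMem hq hsUT hqs
    obtain ⟨hmem, hφ⟩ := hB.mul_of_eq q hq s hsUT hlink
    simp [arrowLabel, arrowFlow, hsUT, hφ, hlink, hmem]
  · have hss : s * s = s :=
      hs.resolve_right fun hsU => hqs (hT s (not_not.mp fun h => hsUT ⟨hsU, h⟩) q).2
    rw [hB.mul_eq_left_of_idempotent hT hU hq hss hqs]
    simp [arrowLabel, arrowFlow, hsUT, hq]

lemma apply_evalFrom {κ : Type*} {b : κ → S} (hb : ∀ j, b j * b j = b j ∨ b j ∈ U)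
    (l : List κ) {q : S} (hq : q ∈ U \ T) (hl : evalFrom b q l ∉ T) :
    (φ (evalFrom b q l)).2.1 = (φ q).2.1 * (l.map fun j => arrowLabel φ T U (b j)).prod ∧
      Finsupp.single (φ (evalFrom b q l)).2.2 1 - Finsupp.single (φ q).2.2 1 =
        (l.map fun j => arrowFlow φ T U (b j)).sum := by
  induction l generalizing q with
  | nil => simp [evalFrom]
  | cons j l ih =>
    rw [evalFrom_cons] at hl ⊢
    have hqj : q * b j ∉ T := fun h => hl (hT.evalFrom_mem b h l)
    obtain ⟨hmem, hlabel, hflow⟩ := hB.apply_mul hT hU hq (hb j) hqj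
    obtain ⟨ihlabel, ihflow⟩ := ih hmem hl
    rw [map_cons, map_cons, prod_cons, sum_cons, ihlabel, hlabel, ← hflow, ← ihflow, mul_assoc]
    exact ⟨rfl, by abel⟩

theorem mul_self_of_wEval_uWord {m n : ℕ} (hm : 1 ≤ m) (hexp : ∀ g : G, g ^ m = 1)
    {b : ℕ → S} (hb : ∀ j, b j * b j = b j ∨ b j ∈ U) {y : S}
    (hy : wEval (· * ·) b (uWord n n m) = some y) (hyU : y ∈ U \ T) : y * y = y := by
  obtain ⟨e, he, hφe⟩ := hB.exists_unit (φ y).1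
  have hey : evalFrom b e (uWord n n m) = y := by
    rw [evalFrom_eq_mul b hy, hB.unit_mul hyU he hφe]
  obtain ⟨hlabel, hflow⟩ := hB.apply_evalFrom hT hU hb (uWord n n m) he (hey ▸ hyU.2)
  rw [hey, hφe, prod_map_uWord hm, pow_mul', hexp, one_pow, one_mul] at hlabel
  rw [hey, hφe, sum_map_uWord hm] at hflow
  have hloop : (φ y).2.2 = (φ y).1 := by
    by_contra hne
    have h := congrArg (· (φ y).1) hflow
    simp only [Finsupp.coe_sub, Pi.sub_apply, Finsupp.single_eq_same,
      Finsupp.single_eq_of_ne (Ne.symm hne), Finsupp.smul_apply, nsmul_eq_mul, Nat.cast_mul,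
      Nat.cast_ofNat] at h
    have h2 : (2 : ℤ) ∣ -1 := ⟨m * _, by rw [← mul_assoc, ← h, zero_sub]⟩
    omega
  exact hB.mul_self_of_unit hyU (Prod.ext rfl (Prod.ext hlabel hloop))

end Ideals

end IsBrandtChart

theorem IsBrandtFactor.mul_self_or_mem_of_wEval_uWord {S : Type u} [Semigroup S] {m n : ℕ}
    (hm : 1 ≤ m) {T U : Set S} (hF : IsBrandtFactor m T U) (hT : IsSemigroupIdeal T)
    (hU : IsSemigroupIdeal U) {b : ℕ → S} (hb : ∀ j, b j * b j = b j ∨ b j ∈ U) {y : S}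
    (hy : wEval (· * ·) b (uWord n n m) = some y) (hyU : y ∈ U) : y * y = y ∨ y ∈ T := by
  by_cases hyT : y ∈ T
  · exact Or.inr hyT
  obtain ⟨ι, G, _, φ, hexp, hB⟩ := hF.exists_isBrandtChart hm
  exact Or.inl (hB.mul_self_of_wEval_uWord hT hU hm hexp hb hy ⟨hyU, hyT⟩)

theorem mul_self_or_mem_of_wEval_vWord {S : Type u} [Semigroup S] {m n : ℕ} (hm : 1 ≤ m)
    (hn : 1 ≤ n) {k : ℕ} (hk : 1 ≤ k) {C : ℕ → Set S} (hC : ∀ j ≤ k, IsSemigroupIdeal (C j))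
    (htop : C k = Set.univ) (hF : ∀ j < k, IsBrandtFactor m (C j) (C (j + 1)))
    (ρ : List ℕ → S) {y : S} (hy : wEval (· * ·) ρ (vWord n m k) = some y) :
    y * y = y ∨ y ∈ C 0 := by
  induction k, hk using Nat.le_induction generalizing C ρ y with
  | base =>
    rw [vWord, wEval_map] at hy
    exact (hF 0 one_pos).mul_self_or_mem_of_wEval_uWord hm (hC 0 zero_le_one) (hC 1 le_rfl)
      (fun _ => Or.inr (htop ▸ Set.mem_univ _)) hy (htop ▸ Set.mem_univ _)
  | succ k hk ih =>
    have ih' : ∀ (ρ : List ℕ → S) {y : S}, wEval (· * ·) ρ (vWord n m k) = some y →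
        y * y = y ∨ y ∈ C 1 := fun ρ _ hy =>
      ih (C := fun j => C (j + 1)) (fun j hj => hC (j + 1) (by omega)) htop
        (fun j hj => hF (j + 1) (by omega)) ρ hy
    choose a ha using fun w : List ℕ => exists_wEval_eq_some ρ
      (l := (uWord n n m).map (· :: w)) (by simpa using uWord_ne_nil hn m)
    choose b hb using fun j : ℕ => exists_wEval_eq_some ρ
      (l := (vWord n m k).map (· ++ [j])) (by simpa using vWord_ne_nil hn m hk)
    have hya : wEval (· * ·) a (vWord n m k) = some y := by
      rwa [vWord_succ' n m hk, wEval_flatMap ρ ha] at hy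
    have hyb : wEval (· * ·) b (uWord n n m) = some y := by
      rwa [vWord_succ n m hk, wEval_flatMap ρ hb] at hy
    rcases ih' a hya with hyy | hy1
    · exact Or.inl hyy
    exact (hF 0 (by omega)).mul_self_or_mem_of_wEval_uWord hm (hC 0 (by omega))
      (hC 1 (by omega)) (fun j => ih' _ ((wEval_map ρ _ _).symm.trans (hb j))) hyb hy1

/-- Let `S` be an `(h,m)`-semigroup with chain of ideals `C` such that
`C 0 = {z}` with `z` the zero of `S`. Then for every `n ≥ 2`, `S` satisfies
`v_{n,m}^{(h)} ≈ (v_{n,m}^{(h)})²`. -/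
theorem hm_semigroup_with_zero_satisfies_vh_identity {S : Type u} [Semigroup S] (h m : ℕ)
    (hh : 1 ≤ h) (hm : 1 ≤ m) (C : ℕ → Set S) (hchain : IsHMChain h m C)
    (z : S) (hz : C 0 = {z}) (hzero : ∀ s : S, z * s = z ∧ s * z = z) :
    ∀ n, 2 ≤ n → ∀ ρ : List ℕ → S,
      wEval (· * ·) ρ (vWord n m h) = wEval (· * ·) ρ (vWord n m h ++ vWord n m h) := by
  intro n hn ρ
  obtain ⟨y, hy⟩ := exists_wEval_eq_some ρ (vWord_ne_nil (show 1 ≤ n by omega) m hh)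
  have hyy : y * y = y := by
    rcases mul_self_or_mem_of_wEval_vWord hm (by omega) hh (fun j hj => (hchain.ideal j hj).2)
      hchain.top hchain.factor ρ hy with hyy | hyz
    · exact hyy
    · rw [hz, Set.mem_singleton_iff] at hyz
      exact hyz ▸ (hzero z).1
  rw [wEval_append ρ hy hy, hyy, hy]
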